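/- Let S and M be symmetric positive definite real N×N matrices, f ∈ ℝ^N, and for y ≥ 0 set w₋(y) := (S + e^{-y} M)^{-1} f and w₊(y) := (e^{-y} S + M)^{-1} f. Let (y_{j,-}, τ_{j,-})_{j=1}^{M₋} and (y_{j,+}, τ_{j,+})_{j=1}^{M₊} be quadrature rules with all nodes y_{j,±} ≥ 0, all weights τ_{j,±} ≥ 0, and Σ_j τ_{j,-} ≤ 1 and Σ_j τ_{j,+} ≤ 1. For s ∈ (0,1) put s₋ := 1-s, s₊ := s, β₀(t) := sin(πt)/(πt), and define the fully discrete solution u(s) := β₀(s₋) Σ_{j=1}^{M₋} τ_{j,-} w₋(y_{j,-}/s₋) + β₀(s₊) Σ_{j=1}^{M₊} τ_{j,+} w₊(y_{j,+}/s₊). Then for every s ∈ (0,1): ‖u(s)‖_M ≤ (4/π) · max(1, 1/λ_min(S, M)) · ‖f‖_{M^{-1}}. -/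

import Mathlib

open Matrix Real Finset

/-! The matrices `S + e^{-y} M` and `e^{-y} S + M` dominate `λ_min(S, M) · M` and `M`
respectively, so the energy estimate `c ‖w‖_M² ≤ wᵀ A w = wᵀ f ≤ ‖w‖_M ‖f‖_{M⁻¹}` bounds
`‖w₋(y)‖_M` and `‖w₊(y)‖_M` by `max(1, 1/λ_min) ‖f‖_{M⁻¹}`, uniformly in `y`. The quadrature
weights have total mass at most one, so the triangle inequality carries this bound to both sums,
and the remaining factor `β₀(1 - s) + β₀(s) = sin(πs) / (πs(1 - s))` is at most `4/π` since
`sin(πs) ≤ 4s(1 - s)`. -/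

/-- The smallest generalized eigenvalue of the pair `(S, M)`:
`λ_min(S, M) = inf_{x ≠ 0} (xᵀ S x)/(xᵀ M x)`. -/
noncomputable def lamMinGen {N : ℕ} (S M : Matrix (Fin N) (Fin N) ℝ) : ℝ :=
  sInf ((fun x : Fin N → ℝ => (x ⬝ᵥ S.mulVec x) / (x ⬝ᵥ M.mulVec x)) '' {x | x ≠ 0})

/-- The `M`-norm `‖x‖_M = √(xᵀ M x)`. -/
noncomputable def normWeighted {N : ℕ} (M : Matrix (Fin N) (Fin N) ℝ) (x : Fin N → ℝ) : ℝ :=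
  Real.sqrt (x ⬝ᵥ M.mulVec x)

/-- `w₋(y) = (S + e^{-y} M)⁻¹ f`. -/
noncomputable def wMinus {N : ℕ} (S M : Matrix (Fin N) (Fin N) ℝ) (f : Fin N → ℝ)
    (y : ℝ) : Fin N → ℝ :=
  (S + Real.exp (-y) • M)⁻¹.mulVec f

/-- `w₊(y) = (e^{-y} S + M)⁻¹ f`. -/
noncomputable def wPlus {N : ℕ} (S M : Matrix (Fin N) (Fin N) ℝ) (f : Fin N → ℝ)
    (y : ℝ) : Fin N → ℝ :=
  (Real.exp (-y) • S + M)⁻¹.mulVec f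

/-- `β₀(t) = sin(πt)/(πt)`. -/
noncomputable def beta0 (t : ℝ) : ℝ := Real.sin (Real.pi * t) / (Real.pi * t)

section WeightedNorm

variable {N : ℕ} {M : Matrix (Fin N) (Fin N) ℝ}

theorem normWeighted_nonneg (M : Matrix (Fin N) (Fin N) ℝ) (x : Fin N → ℝ) :
    0 ≤ normWeighted M x :=
  Real.sqrt_nonneg _

theorem normWeighted_eq_norm (hM : M.PosSemidef) (x : Fin N → ℝ) :
    normWeighted M x = @norm _ (M.toSeminormedAddCommGroup hM).toNorm x := by
  let _ := M.toSeminormedAddCommGroup hM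
  let _ := M.toInnerProductSpace hM
  rw [norm_eq_sqrt_re_inner (𝕜 := ℝ)]
  show √(x ⬝ᵥ M *ᵥ x) = √((M *ᵥ x) ⬝ᵥ star x)
  rw [dotProduct_comm, star_trivial]

theorem dotProduct_mulVec_eq_inner (hM : M.PosSemidef) (x y : Fin N → ℝ) :
    x ⬝ᵥ M *ᵥ y = @inner ℝ _ (M.toInnerProductSpace hM).toInner x y := by
  show x ⬝ᵥ M *ᵥ y = (M *ᵥ y) ⬝ᵥ star x
  rw [dotProduct_comm, star_trivial]

theorem normWeighted_add_le (hM : M.PosSemidef) (x y : Fin N → ℝ) :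
    normWeighted M (x + y) ≤ normWeighted M x + normWeighted M y := by
  simp only [normWeighted_eq_norm hM]
  exact @norm_add_le _ (M.toSeminormedAddCommGroup hM).toSeminormedAddGroup x y

theorem normWeighted_sum_le (hM : M.PosSemidef) {ι : Type*} (s : Finset ι) (x : ι → Fin N → ℝ) :
    normWeighted M (∑ i ∈ s, x i) ≤ ∑ i ∈ s, normWeighted M (x i) := by
  simp only [normWeighted_eq_norm hM]
  exact @norm_sum_le _ _ (M.toSeminormedAddCommGroup hM) s x

theorem normWeighted_smul (c : ℝ) (x : Fin N → ℝ) :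
    normWeighted M (c • x) = |c| * normWeighted M x := by
  rw [normWeighted, normWeighted, mulVec_smul, smul_dotProduct, dotProduct_smul, smul_eq_mul,
    smul_eq_mul, ← mul_assoc, ← sq, Real.sqrt_mul (sq_nonneg c), Real.sqrt_sq_eq_abs]

theorem dotProduct_mulVec_le_normWeighted_mul (hM : M.PosSemidef) (x y : Fin N → ℝ) :
    x ⬝ᵥ M *ᵥ y ≤ normWeighted M x * normWeighted M y := by
  rw [dotProduct_mulVec_eq_inner hM, normWeighted_eq_norm hM, normWeighted_eq_norm hM]
  exact @real_inner_le_norm _ (M.toSeminormedAddCommGroup hM) (M.toInnerProductSpace hM) x y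

theorem normWeighted_sum_smul_le (hM : M.PosSemidef) {ι : Type*} {s : Finset ι} {τ : ι → ℝ}
    {v : ι → Fin N → ℝ} {C : ℝ} (hτ : ∀ j ∈ s, 0 ≤ τ j) (hτs : ∑ j ∈ s, τ j ≤ 1) (hC : 0 ≤ C)
    (hv : ∀ j ∈ s, normWeighted M (v j) ≤ C) :
    normWeighted M (∑ j ∈ s, τ j • v j) ≤ C :=
  calc normWeighted M (∑ j ∈ s, τ j • v j) ≤ ∑ j ∈ s, normWeighted M (τ j • v j) :=
        normWeighted_sum_le hM s _
    _ = ∑ j ∈ s, τ j * normWeighted M (v j) :=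
        sum_congr rfl fun j hj => by rw [normWeighted_smul, abs_of_nonneg (hτ j hj)]
    _ ≤ ∑ j ∈ s, τ j * C := sum_le_sum fun j hj => mul_le_mul_of_nonneg_left (hv j hj) (hτ j hj)
    _ = (∑ j ∈ s, τ j) * C := (sum_mul _ _ _).symm
    _ ≤ C := mul_le_of_le_one_left hC hτs

theorem normWeighted_smul_add_smul_le (hM : M.PosSemidef) {a b C : ℝ} (ha : 0 ≤ a) (hb : 0 ≤ b)
    {u v : Fin N → ℝ} (hu : normWeighted M u ≤ C) (hv : normWeighted M v ≤ C) :
    normWeighted M (a • u + b • v) ≤ (a + b) * C :=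
  calc normWeighted M (a • u + b • v) ≤ normWeighted M (a • u) + normWeighted M (b • v) :=
        normWeighted_add_le hM _ _
    _ = a * normWeighted M u + b * normWeighted M v := by
        rw [normWeighted_smul, normWeighted_smul, abs_of_nonneg ha, abs_of_nonneg hb]
    _ ≤ (a + b) * C := by rw [add_mul]; gcongr

end WeightedNorm

section Coercive

variable {N : ℕ} {A M : Matrix (Fin N) (Fin N) ℝ}

theorem isUnit_det_of_coercive (hM : M.PosDef) {c : ℝ} (hc : 0 < c)
    (hA : ∀ x, c * (x ⬝ᵥ M *ᵥ x) ≤ x ⬝ᵥ A *ᵥ x) : IsUnit A.det := by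
  refine isUnit_iff_ne_zero.mpr fun hdet => ?_
  obtain ⟨x, hx, hAx⟩ := exists_mulVec_eq_zero_iff.mpr hdet
  have hMx : 0 < x ⬝ᵥ M *ᵥ x := by simpa using hM.dotProduct_mulVec_pos hx
  have hcoer := hA x
  rw [hAx, dotProduct_zero] at hcoer
  nlinarith

theorem dotProduct_mulVec_le_add_smul (A : Matrix (Fin N) (Fin N) ℝ) {B : Matrix (Fin N) (Fin N) ℝ}
    (hB : B.PosSemidef) {c : ℝ} (hc : 0 ≤ c) (x : Fin N → ℝ) :
    x ⬝ᵥ A *ᵥ x ≤ x ⬝ᵥ (A + c • B) *ᵥ x := by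
  rw [add_mulVec, dotProduct_add, smul_mulVec, dotProduct_smul, smul_eq_mul]
  exact le_add_of_nonneg_right (mul_nonneg hc (by simpa using hB.dotProduct_mulVec_nonneg x))

theorem normWeighted_inv_mulVec_le (hM : M.PosDef) {c : ℝ} (hc : 0 < c)
    (hA : ∀ x, c * (x ⬝ᵥ M *ᵥ x) ≤ x ⬝ᵥ A *ᵥ x) (f : Fin N → ℝ) :
    normWeighted M (A⁻¹ *ᵥ f) ≤ c⁻¹ * normWeighted M⁻¹ f := by
  set w := A⁻¹ *ᵥ f
  set g := M⁻¹ *ᵥ f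
  have hAw : A *ᵥ w = f := by
    rw [mulVec_mulVec, mul_nonsing_inv _ (isUnit_det_of_coercive hM hc hA), one_mulVec]
  have hMg : M *ᵥ g = f := by
    rw [mulVec_mulVec, mul_nonsing_inv _ hM.det_pos.ne'.isUnit, one_mulVec]
  have hg : normWeighted M g = normWeighted M⁻¹ f := by
    rw [normWeighted, normWeighted, hMg, dotProduct_comm]
  have hw : normWeighted M w ^ 2 = w ⬝ᵥ M *ᵥ w :=
    Real.sq_sqrt (by simpa using hM.posSemidef.dotProduct_mulVec_nonneg w)
  have henergy : c * normWeighted M w ^ 2 ≤ normWeighted M w * normWeighted M g :=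
    calc c * normWeighted M w ^ 2 ≤ w ⬝ᵥ A *ᵥ w := hw ▸ hA w
      _ = w ⬝ᵥ M *ᵥ g := by rw [hAw, hMg]
      _ ≤ normWeighted M w * normWeighted M g :=
        dotProduct_mulVec_le_normWeighted_mul hM.posSemidef w g
  rw [← hg, inv_mul_eq_div, le_div_iff₀ hc]
  obtain hw0 | hw0 := (normWeighted_nonneg M w).eq_or_lt
  · rw [← hw0, zero_mul]
    exact normWeighted_nonneg M g
  · exact le_of_mul_le_mul_left (by linarith) hw0

end Coercive

section GeneralizedEigenvalue

variable {N : ℕ} {S M : Matrix (Fin N) (Fin N) ℝ}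

theorem lamMinGen_mul_le (hS : S.PosSemidef) (hM : M.PosDef) (x : Fin N → ℝ) :
    lamMinGen S M * (x ⬝ᵥ M *ᵥ x) ≤ x ⬝ᵥ S *ᵥ x := by
  obtain rfl | hx := eq_or_ne x 0
  · simp
  have hMx : 0 < x ⬝ᵥ M *ᵥ x := by simpa using hM.dotProduct_mulVec_pos hx
  have hbdd : BddBelow ((fun x : Fin N → ℝ =>
      (x ⬝ᵥ S *ᵥ x) / (x ⬝ᵥ M *ᵥ x)) '' {x | x ≠ 0}) := by
    refine ⟨0, ?_⟩
    rintro _ ⟨y, -, rfl⟩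
    exact div_nonneg (by simpa using hS.dotProduct_mulVec_nonneg y)
      (by simpa using hM.posSemidef.dotProduct_mulVec_nonneg y)
  rw [← le_div_iff₀ hMx]
  exact csInf_le hbdd ⟨x, hx, rfl⟩

theorem rayleigh_ratio_smul (S M : Matrix (Fin N) (Fin N) ℝ) {c : ℝ} (hc : c ≠ 0)
    (x : Fin N → ℝ) :
    (c • x) ⬝ᵥ S *ᵥ (c • x) / ((c • x) ⬝ᵥ M *ᵥ (c • x)) = x ⬝ᵥ S *ᵥ x / (x ⬝ᵥ M *ᵥ x) := by
  simp only [mulVec_smul, smul_dotProduct, dotProduct_smul, smul_eq_mul, ← mul_assoc]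
  exact mul_div_mul_left _ _ (mul_ne_zero hc hc)

-- The ratio is invariant under scaling, so its infimum is attained on the compact unit sphere.
theorem lamMinGen_pos [Nonempty (Fin N)] (hS : S.PosDef) (hM : M.PosDef) :
    0 < lamMinGen S M := by
  set ratio := fun x : Fin N → ℝ => x ⬝ᵥ S *ᵥ x / (x ⬝ᵥ M *ᵥ x)
  have hratio_pos : ∀ x ≠ 0, 0 < ratio x := fun x hx =>
    div_pos (by simpa using hS.dotProduct_mulVec_pos hx) (by simpa using hM.dotProduct_mulVec_pos hx)
  have hsphere : ∀ x ∈ Metric.sphere (0 : Fin N → ℝ) 1, x ≠ 0 := fun x hx =>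
    ne_zero_of_mem_unit_sphere ⟨x, hx⟩
  have hcont : ContinuousOn ratio (Metric.sphere 0 1) :=
    ContinuousOn.div (by fun_prop) (by fun_prop) fun x hx =>
      (by simpa using hM.dotProduct_mulVec_pos (hsphere x hx) : (0 : ℝ) < _).ne'
  obtain ⟨x₀, hx₀, hmin⟩ := (isCompact_sphere (0 : Fin N → ℝ) 1).exists_isMinOn
    (NormedSpace.sphere_nonempty.mpr zero_le_one) hcont
  refine (hratio_pos x₀ (hsphere x₀ hx₀)).trans_le (le_csInf ⟨_, x₀, hsphere x₀ hx₀, rfl⟩ ?_)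
  rintro _ ⟨x, hx, rfl⟩
  have hnx : ‖x‖ ≠ 0 := norm_ne_zero_iff.mpr hx
  calc ratio x₀ ≤ ratio (‖x‖⁻¹ • x) := hmin (by simp [norm_smul, hnx])
    _ = ratio x := rayleigh_ratio_smul S M (inv_ne_zero hnx) x

end GeneralizedEigenvalue

section Trigonometric

theorem sin_div_mul_le_sin {a x : ℝ} (hx : 0 ≤ x) (hxa : x ≤ a) (ha : a ≤ π) :
    sin a / a * x ≤ sin x := by
  obtain rfl | ha0 := (hx.trans hxa).eq_or_lt
  · obtain rfl : x = 0 := le_antisymm hxa hx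
    simp
  have hmem : ∀ {y}, 0 ≤ y → y ≤ a → y ∈ Set.Icc 0 π := fun h0 h1 => ⟨h0, h1.trans ha⟩
  have := strictConcaveOn_sin_Icc.concaveOn.2 (hmem le_rfl ha0.le) (hmem ha0.le le_rfl)
    (sub_nonneg.mpr ((div_le_one ha0).mpr hxa)) (div_nonneg hx ha0.le) (sub_add_cancel 1 _)
  simp only [smul_eq_mul, sin_zero, mul_zero, zero_add, div_mul_cancel₀ x ha0.ne'] at this
  linarith [div_mul_comm (sin a) a x]

-- `cos x = 1 - 2 sin² (x/2)`, and `sin` lies above its chord on `[0, π/4]`.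
theorem cos_le_one_sub_four_div_pi_sq_mul_sq {x : ℝ} (hx : |x| ≤ π / 2) :
    cos x ≤ 1 - 4 / π ^ 2 * x ^ 2 := by
  rw [← cos_abs, ← sq_abs x]
  set t := |x|
  have hchord : sin (π / 4) / (π / 4) * (t / 2) ≤ sin (t / 2) :=
    sin_div_mul_le_sin (by positivity) (by linarith) (by linarith [pi_pos])
  rw [sin_pi_div_four] at hchord
  have hcos : cos t = 1 - 2 * sin (t / 2) ^ 2 := by
    nth_rw 1 [show t = 2 * (t / 2) by ring]
    rw [cos_two_mul', cos_sq']
    ring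
  have hsqrt : √2 ^ 2 = 2 := Real.sq_sqrt zero_le_two
  have hlow : (√2 / 2 / (π / 4) * (t / 2)) ^ 2 ≤ sin (t / 2) ^ 2 :=
    pow_le_pow_left₀ (by positivity) hchord 2
  have : 4 / π ^ 2 * t ^ 2 = 2 * (√2 / 2 / (π / 4) * (t / 2)) ^ 2 := by
    field_simp
    rw [hsqrt]
    ring
  rw [hcos]
  linarith

theorem sin_pi_mul_le_four_mul_mul_one_sub {s : ℝ} (h0 : 0 ≤ s) (h1 : s ≤ 1) :
    sin (π * s) ≤ 4 * s * (1 - s) := by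
  have hπ := pi_pos
  have habs : |π / 2 - π * s| ≤ π / 2 := abs_le.mpr ⟨by nlinarith, by nlinarith⟩
  calc sin (π * s) = cos (π / 2 - π * s) := (cos_pi_div_two_sub _).symm
    _ ≤ 1 - 4 / π ^ 2 * (π / 2 - π * s) ^ 2 := cos_le_one_sub_four_div_pi_sq_mul_sq habs
    _ = 4 * s * (1 - s) := by field_simp; ring

theorem beta0_nonneg {t : ℝ} (h0 : 0 ≤ t) (h1 : t ≤ 1) : 0 ≤ beta0 t :=
  div_nonneg (sin_nonneg_of_nonneg_of_le_pi (by positivity) (by nlinarith [pi_pos]))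
    (by positivity)

theorem beta0_one_sub_add_beta0_le {s : ℝ} (h0 : 0 < s) (h1 : s < 1) :
    beta0 (1 - s) + beta0 s ≤ 4 / π := by
  have hπ := pi_pos
  have h1s : 0 < 1 - s := sub_pos.mpr h1
  have hsin : sin (π * (1 - s)) = sin (π * s) := by rw [mul_one_sub, sin_pi_sub]
  calc beta0 (1 - s) + beta0 s = sin (π * s) / (π * (s * (1 - s))) := by
        unfold beta0
        rw [hsin]
        field_simp
        ring
    _ ≤ 4 * s * (1 - s) / (π * (s * (1 - s))) := by
        gcongr
        exact sin_pi_mul_le_four_mul_mul_one_sub h0.le h1.le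
    _ = 4 / π := by field_simp

end Trigonometric

section SolutionBounds

variable {N : ℕ} {S M : Matrix (Fin N) (Fin N) ℝ}

theorem normWeighted_wMinus_le [Nonempty (Fin N)] (hS : S.PosDef) (hM : M.PosDef)
    (f : Fin N → ℝ) (y : ℝ) :
    normWeighted M (wMinus S M f y) ≤ (lamMinGen S M)⁻¹ * normWeighted M⁻¹ f :=
  normWeighted_inv_mulVec_le hM (lamMinGen_pos hS hM) (fun x =>
    (lamMinGen_mul_le hS.posSemidef hM x).trans
      (dotProduct_mulVec_le_add_smul S hM.posSemidef (exp_pos _).le x)) f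

theorem normWeighted_wPlus_le (hS : S.PosSemidef) (hM : M.PosDef) (f : Fin N → ℝ) (y : ℝ) :
    normWeighted M (wPlus S M f y) ≤ normWeighted M⁻¹ f := by
  have := normWeighted_inv_mulVec_le hM one_pos (fun x => (one_mul _).trans_le
    (dotProduct_mulVec_le_add_smul M hS (exp_pos (-y)).le x)) f
  rwa [inv_one, one_mul, add_comm] at this

end SolutionBounds

theorem fully_discrete_stability_general {N : ℕ} (S M : Matrix (Fin N) (Fin N) ℝ)
    (hS : S.PosDef) (hM : M.PosDef) (f : Fin N → ℝ)
    (Mm Mp : ℕ) (ym : Fin Mm → ℝ) (τm : Fin Mm → ℝ) (yp : Fin Mp → ℝ) (τp : Fin Mp → ℝ)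
    (hτm : ∀ j, 0 ≤ τm j) (hτp : ∀ j, 0 ≤ τp j)
    (hτmsum : ∑ j, τm j ≤ 1) (hτpsum : ∑ j, τp j ≤ 1)
    (s : ℝ) (hs : s ∈ Set.Ioo (0:ℝ) 1) :
    normWeighted M
        (beta0 (1 - s) • ∑ j, τm j • wMinus S M f (ym j / (1 - s)) +
          beta0 s • ∑ j, τp j • wPlus S M f (yp j / s)) ≤
      (4 / Real.pi) * max 1 (1 / lamMinGen S M) * normWeighted M⁻¹ f := by
  obtain ⟨hs0, hs1⟩ := hs
  cases isEmpty_or_nonempty (Fin N)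
  · -- here `lamMinGen S M = sInf ∅ = 0`, but both sides vanish
    simp [Subsingleton.elim _ (0 : Fin N → ℝ), normWeighted]
  set K := max 1 (1 / lamMinGen S M)
  set F := normWeighted M⁻¹ f
  have hF : 0 ≤ F := normWeighted_nonneg _ _
  have hKF : 0 ≤ K * F := mul_nonneg (zero_le_one.trans (le_max_left _ _)) hF
  have hwm : ∀ y, normWeighted M (wMinus S M f y) ≤ K * F := fun y =>
    (normWeighted_wMinus_le hS hM f y).trans
      (mul_le_mul_of_nonneg_right (inv_eq_one_div (lamMinGen S M) ▸ le_max_right _ _) hF)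
  have hwp : ∀ y, normWeighted M (wPlus S M f y) ≤ K * F := fun y =>
    (normWeighted_wPlus_le hS.posSemidef hM f y).trans (le_mul_of_one_le_left hF (le_max_left _ _))
  calc _ ≤ (beta0 (1 - s) + beta0 s) * (K * F) :=
        normWeighted_smul_add_smul_le hM.posSemidef
          (beta0_nonneg (sub_nonneg.mpr hs1.le) (sub_le_self 1 hs0.le)) (beta0_nonneg hs0.le hs1.le)
          (normWeighted_sum_smul_le hM.posSemidef (fun j _ => hτm j) hτmsum hKF fun j _ => hwm _)
          (normWeighted_sum_smul_le hM.posSemidef (fun j _ => hτp j) hτpsum hKF fun j _ => hwp _)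
    _ ≤ 4 / π * K * F := by
        rw [mul_assoc]
        gcongr
        exact beta0_one_sub_add_beta0_le hs0 hs1

/-- s-uniform stability of the fully discrete scheme (Proposition 3.4, matrix form):
for quadrature rules with nonnegative nodes, nonnegative weights summing to at most 1,
the fully discrete solution
`u(s) = β₀(1-s) Σ_j τ_{j,-} w₋(y_{j,-}/(1-s)) + β₀(s) Σ_j τ_{j,+} w₊(y_{j,+}/s)`
satisfies `‖u(s)‖_M ≤ (4/π) max(1, 1/λ_min(S,M)) ‖f‖_{M⁻¹}` for every `s ∈ (0,1)`. -/
theorem fully_discrete_stability {N : ℕ} (S M : Matrix (Fin N) (Fin N) ℝ)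
    (hS : S.PosDef) (hM : M.PosDef) (f : Fin N → ℝ)
    (Mm Mp : ℕ) (ym : Fin Mm → ℝ) (τm : Fin Mm → ℝ) (yp : Fin Mp → ℝ) (τp : Fin Mp → ℝ)
    (hym : ∀ j, 0 ≤ ym j) (hyp : ∀ j, 0 ≤ yp j)
    (hτm : ∀ j, 0 ≤ τm j) (hτp : ∀ j, 0 ≤ τp j)
    (hτmsum : ∑ j, τm j ≤ 1) (hτpsum : ∑ j, τp j ≤ 1)
    (s : ℝ) (hs : s ∈ Set.Ioo (0:ℝ) 1) :
    normWeighted M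
        (beta0 (1 - s) • ∑ j, τm j • wMinus S M f (ym j / (1 - s)) +
          beta0 s • ∑ j, τp j • wPlus S M f (yp j / s)) ≤
      (4 / Real.pi) * max 1 (1 / lamMinGen S M) * normWeighted M⁻¹ f :=
  fully_discrete_stability_general S M hS hM f Mm Mp ym τm yp τp hτm hτp hτmsum hτpsum s hs
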